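/- arXiv:1206.2283 — 3 statements merged into one kernel-verified Lean document; each statement's English description precedes it below -/
import Mathlib

section
/- Let K ⊆ L be an extension of differential fields of characteristic zero (the derivation of L restricts to the derivation of K). Let a ∈ K and let α ∈ L satisfy α′ = a. If a is not a derivative in K, i.e. there is no b ∈ K with b′ = a, then α is transcendental over K. -/
namespace TranscAux

open Polynomial
variable {K L : Type*} [Field K] [Field L] [Algebra K L]
    [CharZero K] [CharZero L]
    (dK : Derivation ℚ K K) (dL : Derivation ℚ L L)

noncomputable def Dcoeff (p : K[X]) : K[X] := p.sum fun i c => C (dK c) * X ^ i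

lemma Dcoeff_coeff (p : K[X]) (j : ℕ) : (Dcoeff dK p).coeff j = dK (p.coeff j) := by
  rw [Dcoeff, Polynomial.sum_def, Polynomial.finset_sum_coeff]
  simp only [coeff_C_mul, coeff_X_pow, mul_ite, mul_one, mul_zero]
  by_cases h : j ∈ p.support
  · rw [Finset.sum_eq_single j]
    · simp
    · intro b _ hb; simp [Ne.symm hb]
    · intro hj; exact absurd h hj
  · rw [Finset.sum_eq_zero, Polynomial.notMem_support_iff.mp h, map_zero]
    intro b hb
    have : j ≠ b := fun e => h (e ▸ hb)
    rw [if_neg this]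

lemma Dcoeff_add (p q : K[X]) : Dcoeff dK (p + q) = Dcoeff dK p + Dcoeff dK q := by
  ext j; simp [Dcoeff_coeff]

lemma key (hcompat : ∀ x : K, dL (algebraMap K L x) = algebraMap K L (dK x))
    (α : L) (p : K[X]) :
    dL (aeval α p) = aeval α (Dcoeff dK p) + aeval α (derivative p) * dL α := by
  induction p using Polynomial.induction_on' with
  | add p q hp hq =>
    rw [map_add, map_add, hp, hq, Dcoeff_add, map_add, derivative_add, map_add]
    ring
  | monomial n c =>
    rw [Dcoeff, Polynomial.sum_monomial_index _ _ (by simp)]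
    simp only [aeval_monomial, derivative_monomial, Derivation.leibniz,
      Derivation.leibniz_pow, hcompat, map_mul, map_natCast, aeval_C, aeval_X_pow,
      smul_eq_mul, nsmul_eq_mul, map_mul]
    ring

theorem thm'
    (hcompat : ∀ x : K, dL (algebraMap K L x) = algebraMap K L (dK x))
    (a : K) (α : L) (hα : dL α = algebraMap K L a)
    (ha : ¬ ∃ b : K, dK b = a) :
    Transcendental K α := by
  intro halg
  have hint : IsIntegral K α := halg.isIntegral
  set p := minpoly K α with hp
  have hmon : p.Monic := minpoly.monic hint
  set n := p.natDegree with hn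
  have hn1 : 1 ≤ n := minpoly.natDegree_pos hint
  set q : K[X] := Dcoeff dK p + C a * derivative p with hq
  have haq : aeval α q = 0 := by
    rw [hq, map_add, map_mul, aeval_C, ← hα, mul_comm, ← key dK dL hcompat,
      minpoly.aeval, map_zero]
  have hqc : ∀ j, n ≤ j → q.coeff j = 0 := by
    intro j hj
    rw [hq, coeff_add, Dcoeff_coeff, coeff_C_mul, coeff_derivative]
    rcases eq_or_lt_of_le hj with h | h
    · rw [← h]
      have h1 : p.coeff n = 1 := hmon.coeff_natDegree
      have h2 : p.coeff (n + 1) = 0 := coeff_eq_zero_of_natDegree_lt (lt_add_one n)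
      simp [h1, h2]
    · have h1 : p.coeff j = 0 := coeff_eq_zero_of_natDegree_lt h
      have h2 : p.coeff (j + 1) = 0 :=
        coeff_eq_zero_of_natDegree_lt (lt_trans h (lt_add_one j))
      simp [h1, h2]
  have hdeg : q.degree < p.degree := by
    rw [Polynomial.degree_eq_natDegree hmon.ne_zero, ← hn]
    exact Polynomial.degree_lt_iff_coeff_zero q n |>.mpr
      (fun m hm => hqc m (by exact_mod_cast hm))
  have hq0 : q = 0 := by
    by_contra h
    exact absurd (minpoly.degree_le_of_ne_zero K α h haq) (not_le.mpr hdeg)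
  have hc : dK (p.coeff (n - 1)) + a * (n : K) = 0 := by
    have := congrArg (fun r : K[X] => r.coeff (n - 1)) hq0
    simp only [hq, coeff_add, Dcoeff_coeff, coeff_C_mul, coeff_derivative,
      coeff_zero] at this
    rw [Nat.sub_add_cancel hn1, hmon.coeff_natDegree] at this
    push_cast [Nat.cast_sub hn1] at this
    linear_combination this
  apply ha
  refine ⟨(-(1 : ℚ)/n) • p.coeff (n - 1), ?_⟩
  rw [dK.map_smul, Rat.smul_def]
  have hnK : (n : K) ≠ 0 := Nat.cast_ne_zero.mpr (by omega)
  have hd : dK (p.coeff (n - 1)) = -(a * n) := by linear_combination hc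
  rw [hd]
  push_cast
  field_simp

end TranscAux

/-- If `K ⊆ L` is an extension of differential fields of characteristic
zero, `a ∈ K`, `α ∈ L` with `α′ = a`, and `a` is not a derivative in `K`, then `α`
is transcendental over `K`. -/
theorem transcendental_of_integral_of_not_derivative
    (K L : Type*) [Field K] [Field L] [Algebra K L]
    [CharZero K] [CharZero L]
    (dK : Derivation ℚ K K) (dL : Derivation ℚ L L)
    (hcompat : ∀ x : K, dL (algebraMap K L x) = algebraMap K L (dK x))
    (a : K) (α : L) (hα : dL α = algebraMap K L a)
    (ha : ¬ ∃ b : K, dK b = a) :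
    Transcendental K α :=
  TranscAux.thm' dK dL hcompat a α hα ha
end

section
/- Let K ⊆ L be an extension of differential fields of characteristic zero, let a ∈ K, and let α ∈ L satisfy α′ = a. Assume a is not a derivative in K, i.e. there is no b ∈ K with b′ = a. Then the extension K(α) (the subfield of L generated by K and α, which is a differential subfield) has the same constants as K: every x ∈ K(α) with x′ = 0 is an element c of K with c′ = 0. -/
/-!
Let `D` be the derivation of `K[X]` extending `′` with `X′ = a`, so that `P(α)′ = (D P)(α)`.
If `a` has no integral in `K`, a polynomial killed by `D` is a constant of `K`: its leading
coefficient is a constant, and the next coefficient would then produce an integral of `a`.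
As `D` lowers the degree of monic polynomials, no monic `Q ≠ 1` divides `D Q`. Applied to the
minimal polynomial this shows that `α` is transcendental; applied to the denominator of a
constant `P(α) / Q(α)` in lowest terms it shows `Q = 1`, and then `D P = 0`.
-/

open Polynomial
open scoped Differential IntermediateField

lemma exists_isCoprime_monic_of_mem_adjoin_simple {K L : Type*} [Field K] [Field L]
    [Algebra K L] {α x : L} (hα : Transcendental K α) (hx : x ∈ K⟮α⟯) :
    ∃ p q : K[X], IsCoprime p q ∧ q.Monic ∧ x = aeval α p / aeval α q := by
  set u := (RatFunc.algEquivOfTranscendental α hα).symm ⟨x, hx⟩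
  refine ⟨u.num, u.denom, RatFunc.isCoprime_num_denom u, RatFunc.monic_denom u, ?_⟩
  rw [← RatFunc.algEquivOfTranscendental_apply α hα, AlgEquiv.apply_symm_apply]

namespace Differential

section Polynomial

variable {K : Type*} [Field K] [Differential K] {a : K} {p q : K[X]}

lemma coeff_implicitDeriv_C (a : K) (p : K[X]) (n : ℕ) :
    (implicitDeriv (C a) p).coeff n = (p.coeff n)′ + a * (p.coeff (n + 1) * (n + 1)) := by
  simp [implicitDeriv, coeff_derivative]

lemma degree_implicitDeriv_C_lt (hp : 0 < p.natDegree) (hlc : p.leadingCoeff′ = 0) :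
    (implicitDeriv (C a) p).degree < p.degree := by
  rw [degree_eq_natDegree (ne_zero_of_natDegree_gt hp), degree_lt_iff_coeff_zero]
  intro m hm
  have hm : p.natDegree ≤ m := by exact_mod_cast hm
  rw [coeff_implicitDeriv_C, coeff_eq_zero_of_natDegree_lt (by omega : p.natDegree < m + 1)]
  rcases hm.eq_or_lt with rfl | hlt
  · simp [hlc]
  · simp [coeff_eq_zero_of_natDegree_lt hlt]

variable [CharZero K]

lemma natDegree_eq_zero_of_implicitDeriv_C_eq_zero (ha : ¬∃ b : K, b′ = a)
    (h : implicitDeriv (C a) p = 0) : p.natDegree = 0 := by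
  by_contra hdeg
  obtain ⟨m, hm⟩ : ∃ m, p.natDegree = m + 1 := Nat.exists_eq_succ_of_ne_zero hdeg
  have hcoeff (n : ℕ) : (p.coeff n)′ + a * (p.coeff (n + 1) * (n + 1)) = 0 := by
    rw [← coeff_implicitDeriv_C, h, coeff_zero]
  set c := p.coeff (m + 1)
  have hc : c ≠ 0 := by
    have hp : p ≠ 0 := by rintro rfl; simp at hm
    simpa [c, leadingCoeff, hm] using leadingCoeff_ne_zero.mpr hp
  have hc' : c′ = 0 := by
    simpa [coeff_eq_zero_of_natDegree_lt (by omega : p.natDegree < m + 1 + 1)] using hcoeff (m + 1)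
  have hk : ((m : K) + 1) * c ≠ 0 := mul_ne_zero (by exact_mod_cast m.succ_ne_zero) hc
  have hk' : (((m : K) + 1) * c)′ = 0 := by
    rw [Derivation.leibniz, hc', ← Nat.cast_succ, Derivation.map_natCast]
    simp
  -- comparing coefficients of `X ^ m` in `D p = 0`
  refine ha ⟨-p.coeff m / (((m : K) + 1) * c), ?_⟩
  rw [Derivation.leibniz_div, hk', map_neg, eq_neg_of_add_eq_zero_left (hcoeff m)]
  simp only [smul_eq_mul, mul_zero, sub_zero]
  field_simp
  ring

lemma implicitDeriv_C_eq_zero_iff (ha : ¬∃ b : K, b′ = a) :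
    implicitDeriv (C a) p = 0 ↔ ∃ c : K, c′ = 0 ∧ p = C c := by
  constructor
  · intro h
    obtain ⟨c, rfl⟩ : ∃ c, p = C c :=
      ⟨_, eq_C_of_natDegree_eq_zero (natDegree_eq_zero_of_implicitDeriv_C_eq_zero ha h)⟩
    exact ⟨c, by simpa using h, rfl⟩
  · rintro ⟨c, hc, rfl⟩
    simp [hc]

lemma eq_one_of_dvd_implicitDeriv_C (ha : ¬∃ b : K, b′ = a) (hq : q.Monic)
    (hdvd : q ∣ implicitDeriv (C a) q) : q = 1 := by
  refine hq.natDegree_eq_zero.mp (Nat.eq_zero_of_not_pos fun hpos => ?_)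
  have hzero : implicitDeriv (C a) q = 0 :=
    eq_zero_of_dvd_of_degree_lt hdvd (degree_implicitDeriv_C_lt hpos (by simp [hq.leadingCoeff]))
  exact absurd (natDegree_eq_zero_of_implicitDeriv_C_eq_zero ha hzero) hpos.ne'

end Polynomial

variable {K L : Type*} [Field K] [Field L] [Algebra K L] [Differential K] [Differential L]
  [DifferentialAlgebra K L] [CharZero K] {a : K} {α : L}

lemma transcendental_of_deriv_eq_algebraMap (ha : ¬∃ b : K, b′ = a)
    (hα : α′ = algebraMap K L a) : Transcendental K α := by
  intro halg
  have hint := halg.isIntegral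
  have hdvd : minpoly K α ∣ implicitDeriv (C a) (minpoly K α) := by
    refine minpoly.dvd K α ?_
    rw [← deriv_aeval_eq_implicitDeriv α (C a) (by rwa [aeval_C]), minpoly.aeval, map_zero]
  exact minpoly.ne_one K α (eq_one_of_dvd_implicitDeriv_C ha (minpoly.monic hint) hdvd)

lemma exists_algebraMap_eq_of_deriv_eq_zero (ha : ¬∃ b : K, b′ = a)
    (hα : α′ = algebraMap K L a) {x : L} (hx : x ∈ K⟮α⟯) (hx' : x′ = 0) :
    ∃ c : K, c′ = 0 ∧ algebraMap K L c = x := by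
  have htr := transcendental_of_deriv_eq_algebraMap ha hα
  have hinj := transcendental_iff_injective.mp htr
  set D := implicitDeriv (C a)
  have hD (r : K[X]) : (aeval α r)′ = aeval α (D r) :=
    deriv_aeval_eq_implicitDeriv α (C a) (by rwa [aeval_C]) r
  obtain ⟨p, q, hpq, hq, rfl⟩ := exists_isCoprime_monic_of_mem_adjoin_simple htr hx
  have hqα : aeval α q ≠ 0 := fun h => hq.ne_zero (hinj (h.trans (map_zero _).symm))
  have hcross : q * D p = p * D q := by
    apply hinj
    rw [Derivation.leibniz_div, smul_eq_zero] at hx'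
    simpa [hD, hqα, sub_eq_zero] using hx'
  have hq1 : q = 1 :=
    eq_one_of_dvd_implicitDeriv_C ha hq (hpq.symm.dvd_of_dvd_mul_left ⟨D p, hcross.symm⟩)
  obtain ⟨c, hc, rfl⟩ := (implicitDeriv_C_eq_zero_iff ha).mp (by simpa [hq1, D] using hcross)
  exact ⟨c, hc, by simp [hq1]⟩

end Differential

/-- Adjoining an integral of a non-derivative produces no new constants:
every constant of `K(α)` comes from a constant of `K`. -/
theorem constants_of_adjoin_integral
    (K L : Type*) [Field K] [Field L] [Algebra K L]
    [CharZero K] [CharZero L]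
    (dK : Derivation ℚ K K) (dL : Derivation ℚ L L)
    (hcompat : ∀ x : K, dL (algebraMap K L x) = algebraMap K L (dK x))
    (a : K) (α : L) (hα : dL α = algebraMap K L a)
    (ha : ¬ ∃ b : K, dK b = a) :
    ∀ x : L, x ∈ IntermediateField.adjoin K {α} → dL x = 0 →
      ∃ c : K, dK c = 0 ∧ algebraMap K L c = x := by
  let : Differential K := ⟨dK.restrictScalars ℤ⟩
  let : Differential L := ⟨dL.restrictScalars ℤ⟩
  have : DifferentialAlgebra K L := ⟨hcompat⟩
  exact fun x hx hx' => Differential.exists_algebraMap_eq_of_deriv_eq_zero ha hα hx hx'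
end

section
/- Let K ⊆ L be an extension of differential fields of characteristic zero such that every constant of L lies in K (i.e. every x ∈ L with x′ = 0 belongs to the image of K). Let α ∈ L be a nonzero element which is the exponential of an integral over K, i.e. α′/α = k for some k ∈ K. If α is algebraic over K, then there exists a natural number n ≥ 1 such that αⁿ ∈ K. -/
/-!
If `α′ = k α` and `p = Xⁿ + ⋯ + a₀` is the minimal polynomial of `α`, differentiating `p(α) = 0`
shows that `α` is a root of `pᴰ + k X p′ - n k p`, where `pᴰ` differentiates the coefficients.
Its degree is less than `n`, so it vanishes, and its constant coefficient gives `a₀′ = n k a₀`.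
Hence `αⁿ / a₀` is a constant, so it lies in `K`.
-/

open Polynomial
open scoped Differential

theorem Polynomial.coeff_X_mul_derivative {R : Type*} [CommSemiring R] (p : R[X]) (m : ℕ) :
    (X * derivative p).coeff m = m * p.coeff m := by
  cases m with
  | zero => simp
  | succ j => rw [coeff_X_mul, coeff_derivative, mul_comm]; push_cast; rfl

namespace Differential

theorem degree_mapCoeffs_add_sub_lt {K : Type*} [Field K] [Differential K] {p : K[X]}
    (hp : p.Monic) (k : K) :
    (mapCoeffs p + C k * (X * derivative p) - C (p.natDegree * k) * p).degree < p.degree := by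
  rw [degree_eq_natDegree hp.ne_zero, degree_lt_iff_coeff_zero]
  intro m hm
  simp only [coeff_sub, coeff_add, coeff_mapCoeffs, coeff_C_mul, coeff_X_mul_derivative]
  rcases hm.eq_or_lt with rfl | h
  · simp only [hp.coeff_natDegree, Derivation.map_one_eq_zero]
    ring
  · simp [coeff_eq_zero_of_natDegree_lt h]

variable {K L : Type*} [Field K] [Field L] [Algebra K L] [Differential K] [Differential L]
  [DifferentialAlgebra K L]

theorem deriv_aeval_of_deriv_eq_mul {α : L} {k : K} (hα : α′ = algebraMap K L k * α)
    (p : K[X]) : (aeval α p)′ = aeval α (mapCoeffs p + C k * (X * derivative p)) := by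
  rw [deriv_aeval_eq, hα]
  simp only [map_add, map_mul, aeval_C, aeval_X]
  ring

theorem deriv_coeff_zero_minpoly_of_deriv_eq_mul {α : L} {k : K} (hint : IsIntegral K α)
    (hα : α′ = algebraMap K L k * α) :
    ((minpoly K α).coeff 0)′ = (minpoly K α).natDegree * k * (minpoly K α).coeff 0 := by
  set p := minpoly K α
  set q := mapCoeffs p + C k * (X * derivative p) - C (p.natDegree * k) * p
  have hq_aeval : aeval α q = 0 := by
    have hp : aeval α p = 0 := minpoly.aeval K α
    simp only [q, map_sub, ← deriv_aeval_of_deriv_eq_mul hα, hp, map_mul]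
    simp
  have hq : q = 0 := eq_zero_of_dvd_of_degree_lt (minpoly.dvd K α hq_aeval)
    (degree_mapCoeffs_add_sub_lt (minpoly.monic hint) k)
  have := congr_arg (coeff · 0) hq
  simp only [q, coeff_sub, coeff_add, coeff_mapCoeffs, coeff_C_mul, coeff_X_mul_zero,
    coeff_zero] at this
  linear_combination this

theorem exists_pow_mem_range_of_logDeriv_mem_range [ContainConstants K L] {α : L}
    (hint : IsIntegral K α) {k : K} (hk : logDeriv α = algebraMap K L k) :
    ∃ n, 0 < n ∧ α ^ n ∈ (algebraMap K L).range := by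
  rcases eq_or_ne α 0 with rfl | hα0
  · exact ⟨1, one_pos, 0, by simp⟩
  set a₀ := (minpoly K α).coeff 0
  set n := (minpoly K α).natDegree
  have ha₀ : a₀ ≠ 0 := minpoly.coeff_zero_ne_zero hint hα0
  have hα : α′ = algebraMap K L k * α := by
    rw [← hk, logDeriv, div_mul_cancel₀ _ hα0]
  have hlog_a₀ : logDeriv a₀ = n * k := by
    rw [logDeriv, deriv_coeff_zero_minpoly_of_deriv_eq_mul hint hα, mul_div_cancel_right₀ _ ha₀]
  have hconst : (α ^ n / algebraMap K L a₀)′ = 0 := by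
    rw [← logDeriv_eq_zero, logDeriv_div _ _ (pow_ne_zero _ hα0) (by simpa using ha₀),
      logDeriv_pow, logDeriv_algebraMap, hlog_a₀, hk]
    simp
  obtain ⟨c, hc⟩ := mem_range_of_deriv_eq_zero K hconst
  refine ⟨n, minpoly.natDegree_pos hint, c * a₀, ?_⟩
  rw [map_mul, hc, div_mul_cancel₀ _ (by simpa using ha₀)]

end Differential

theorem pow_mem_of_algebraic_exponential_of_integral_general
    (K L : Type*) [Field K] [Field L] [Algebra K L]
    [CharZero K] [CharZero L]
    (dK : Derivation ℚ K K) (dL : Derivation ℚ L L)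
    (hcompat : ∀ x : K, dL (algebraMap K L x) = algebraMap K L (dK x))
    (hconst : ∀ x : L, dL x = 0 → ∃ c : K, algebraMap K L c = x)
    (α : L) (k : K) (hk : dL α / α = algebraMap K L k)
    (halg : IsAlgebraic K α) :
    ∃ n : ℕ, 1 ≤ n ∧ ∃ c : K, algebraMap K L c = α ^ n := by
  let _ : Differential K := ⟨dK.restrictScalars ℤ⟩
  let _ : Differential L := ⟨dL.restrictScalars ℤ⟩
  have _ : DifferentialAlgebra K L := ⟨hcompat⟩
  have _ : Differential.ContainConstants K L := ⟨fun h ↦ hconst _ h⟩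
  exact Differential.exists_pow_mem_range_of_logDeriv_mem_range halg.isIntegral hk

/-- If `L|K` has no new constants and `α ∈ L` is a nonzero exponential of
an integral over `K` (`α′/α = k ∈ K`) which is algebraic over `K`, then `αⁿ ∈ K` for
some `n ≥ 1`. -/
theorem pow_mem_of_algebraic_exponential_of_integral
    (K L : Type*) [Field K] [Field L] [Algebra K L]
    [CharZero K] [CharZero L]
    (dK : Derivation ℚ K K) (dL : Derivation ℚ L L)
    (hcompat : ∀ x : K, dL (algebraMap K L x) = algebraMap K L (dK x))
    (hconst : ∀ x : L, dL x = 0 → ∃ c : K, algebraMap K L c = x)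
    (α : L) (hα0 : α ≠ 0) (k : K) (hk : dL α / α = algebraMap K L k)
    (halg : IsAlgebraic K α) :
    ∃ n : ℕ, 1 ≤ n ∧ ∃ c : K, algebraMap K L c = α ^ n :=
  pow_mem_of_algebraic_exponential_of_integral_general K L dK dL hcompat hconst α k hk halg
end
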